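/- arXiv:1112.2002 — 2 statements merged into one kernel-verified Lean document; each statement's English description precedes it below -/
import Mathlib

section
/- Truncations of minimizers are minimizers: Let Ω ⊆ ℝⁿ (n ≥ 1) be a bounded open set, let a : ℝⁿ → ℝ be nonnegative and integrable on Ω, and let u : ℝⁿ → ℝ be a Lipschitz function such that ∫_Ω a‖∇u‖ dx ≤ ∫_Ω a‖∇v‖ dx for every Lipschitz v : ℝⁿ → ℝ with v = u on the frontier ∂Ω. Fix λ ∈ ℝ and set u₊ := max(u − λ, 0) and u₋ := min(u, λ). Then: (i) ∫_Ω a‖∇u₊‖ dx ≤ ∫_Ω a‖∇v‖ dx for every Lipschitz v : ℝⁿ → ℝ with v = u₊ on ∂Ω; and (ii) ∫_Ω a‖∇u₋‖ dx ≤ ∫_Ω a‖∇v‖ dx for every Lipschitz v : ℝⁿ → ℝ with v = u₋ on ∂Ω. -/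
/-!
Write `u = u₊ + u₋`. Where `u > λ` the function `u₋` is locally constant and `u₊ = u - λ`;
where `u < λ` the roles swap; on `{u = λ}` both truncations attain a local extremum, so their
derivatives vanish. Hence `‖∇u₊‖ + ‖∇u₋‖ ≤ ‖∇u‖` everywhere (with `∇ = 0` where undefined),
i.e. `F(u₊) + F(u₋) ≤ F(u)`.
If `v` has the boundary values of `u₊`, then `v + u₋` has those of `u`, and minimality of `u`
with the triangle inequality give `F(u₊) + F(u₋) ≤ F(u) ≤ F(v + u₋) ≤ F(v) + F(u₋)`.
The case of `u₋` is symmetric.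
-/

open MeasureTheory Filter
open scoped NNReal Topology

theorem max_sub_zero_add_min (t c : ℝ) : max (t - c) 0 + min t c = t := by
  rcases le_total t c with h | h <;> simp [h]

section Truncation

variable {E : Type*} [NormedAddCommGroup E] [NormedSpace ℝ E]

theorem norm_fderiv_max_sub_add_norm_fderiv_min_le {u : E → ℝ} (hu : Continuous u) (c : ℝ)
    (x : E) :
    ‖fderiv ℝ (fun y => max (u y - c) 0) x‖ + ‖fderiv ℝ (fun y => min (u y) c) x‖ ≤
      ‖fderiv ℝ u x‖ := by
  rcases lt_trichotomy (u x) c with hlt | heq | hgt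
  · have hnear : ∀ᶠ y in 𝓝 x, u y < c := hu.continuousAt.eventually_lt continuousAt_const hlt
    have hmax : (fun y => max (u y - c) 0) =ᶠ[𝓝 x] fun _ => 0 := by
      filter_upwards [hnear] with y hy using max_eq_right (by linarith)
    have hmin : (fun y => min (u y) c) =ᶠ[𝓝 x] u := by
      filter_upwards [hnear] with y hy using min_eq_left hy.le
    simp [hmax.fderiv_eq, hmin.fderiv_eq]
  · have hmax : IsLocalMin (fun y => max (u y - c) 0) x :=
      .of_forall fun y => by simp [heq]
    have hmin : IsLocalMax (fun y => min (u y) c) x :=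
      .of_forall fun y => by simp [heq]
    simp [hmax.fderiv_eq_zero, hmin.fderiv_eq_zero]
  · have hnear : ∀ᶠ y in 𝓝 x, c < u y := continuousAt_const.eventually_lt hu.continuousAt hgt
    have hmax : (fun y => max (u y - c) 0) =ᶠ[𝓝 x] fun y => u y - c := by
      filter_upwards [hnear] with y hy using max_eq_left (by linarith)
    have hmin : (fun y => min (u y) c) =ᶠ[𝓝 x] fun _ => c := by
      filter_upwards [hnear] with y hy using min_eq_right hy.le
    simp [hmax.fderiv_eq, hmin.fderiv_eq, fderiv_sub_const]

end Truncation

section LeastGradient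

variable {E : Type*} [NormedAddCommGroup E] [InnerProductSpace ℝ E] [CompleteSpace E]

noncomputable def weightedGradientIntegral [MeasurableSpace E] (μ : Measure E) (Ω : Set E)
    (a f : E → ℝ) : ℝ :=
  ∫ x in Ω, a x * ‖gradient f x‖ ∂μ

def IsWeightedLeastGradient [MeasurableSpace E] (μ : Measure E) (Ω : Set E) (a u : E → ℝ) :
    Prop :=
  ∀ v : E → ℝ, (∃ K, LipschitzWith K v) → (∀ x ∈ frontier Ω, v x = u x) →
    weightedGradientIntegral μ Ω a u ≤ weightedGradientIntegral μ Ω a v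

theorem norm_gradient_eq_norm_fderiv (f : E → ℝ) (x : E) : ‖gradient f x‖ = ‖fderiv ℝ f x‖ :=
  (InnerProductSpace.toDual ℝ E).symm.norm_map _

variable [MeasurableSpace E] [OpensMeasurableSpace E] {μ : Measure E} {Ω : Set E} {a : E → ℝ}

theorem LipschitzWith.integrableOn_mul_norm_gradient {f : E → ℝ} {K : ℝ≥0}
    (hf : LipschitzWith K f) (ha : IntegrableOn a Ω μ) :
    IntegrableOn (fun x => a x * ‖gradient f x‖) Ω μ := by
  simp_rw [norm_gradient_eq_norm_fderiv]
  refine ha.mul_bdd (c := K) (measurable_fderiv ℝ f).norm.aestronglyMeasurable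
    (.of_forall fun x => ?_)
  rw [norm_norm]
  exact norm_fderiv_le_of_lipschitz ℝ hf

theorem add_weightedGradientIntegral_le (ha0 : ∀ x, 0 ≤ a x) (ha : IntegrableOn a Ω μ)
    {p q : E → ℝ} {Kp Kq : ℝ≥0} (hp : LipschitzWith Kp p) (hq : LipschitzWith Kq q)
    (hpq : ∀ᵐ x ∂μ.restrict Ω, ‖fderiv ℝ p x‖ + ‖fderiv ℝ q x‖ ≤ ‖fderiv ℝ (p + q) x‖) :
    weightedGradientIntegral μ Ω a p + weightedGradientIntegral μ Ω a q ≤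
      weightedGradientIntegral μ Ω a (p + q) := by
  have hp_int := hp.integrableOn_mul_norm_gradient ha
  have hq_int := hq.integrableOn_mul_norm_gradient ha
  rw [weightedGradientIntegral, weightedGradientIntegral, weightedGradientIntegral,
    ← integral_add hp_int hq_int]
  refine integral_mono_of_nonneg (.of_forall fun x => by have := ha0 x; positivity)
    ((hp.add hq).integrableOn_mul_norm_gradient ha) ?_
  filter_upwards [hpq] with x hx
  simp only [norm_gradient_eq_norm_fderiv, ← mul_add]
  exact mul_le_mul_of_nonneg_left hx (ha0 x)

variable [FiniteDimensional ℝ E] [BorelSpace E] [μ.IsAddHaarMeasure]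

theorem weightedGradientIntegral_add_le (ha0 : ∀ x, 0 ≤ a x) (ha : IntegrableOn a Ω μ)
    {f g : E → ℝ} {Kf Kg : ℝ≥0} (hf : LipschitzWith Kf f) (hg : LipschitzWith Kg g) :
    weightedGradientIntegral μ Ω a (f + g) ≤
      weightedGradientIntegral μ Ω a f + weightedGradientIntegral μ Ω a g := by
  have hf_int := hf.integrableOn_mul_norm_gradient ha
  have hg_int := hg.integrableOn_mul_norm_gradient ha
  rw [weightedGradientIntegral, weightedGradientIntegral, weightedGradientIntegral,
    ← integral_add hf_int hg_int]
  refine integral_mono_of_nonneg (.of_forall fun x => by have := ha0 x; positivity)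
    (hf_int.add hg_int) ?_
  filter_upwards [ae_restrict_of_ae (hf.ae_differentiableAt (μ := μ)),
    ae_restrict_of_ae (hg.ae_differentiableAt (μ := μ))] with x hfx hgx
  simp only [norm_gradient_eq_norm_fderiv, ← mul_add, fderiv_add hfx hgx]
  exact mul_le_mul_of_nonneg_left (norm_add_le _ _) (ha0 x)

theorem IsWeightedLeastGradient.of_add (ha0 : ∀ x, 0 ≤ a x) (ha : IntegrableOn a Ω μ)
    {p q : E → ℝ} {Kp Kq : ℝ≥0} (hp : LipschitzWith Kp p) (hq : LipschitzWith Kq q)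
    (hpq : ∀ᵐ x ∂μ.restrict Ω, ‖fderiv ℝ p x‖ + ‖fderiv ℝ q x‖ ≤ ‖fderiv ℝ (p + q) x‖)
    (hmin : IsWeightedLeastGradient μ Ω a (p + q)) :
    IsWeightedLeastGradient μ Ω a p := by
  rintro v ⟨K, hv⟩ hvp
  have hsplit := add_weightedGradientIntegral_le ha0 ha hp hq hpq
  have hcompare := hmin (v + q) ⟨K + Kq, hv.add hq⟩ fun x hx => by simp [hvp x hx]
  have htriangle := weightedGradientIntegral_add_le ha0 ha hv hq
  linarith

end LeastGradient

theorem truncations_of_minimizers_are_minimizers_general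
    (n : ℕ)
    (Ω : Set (EuclideanSpace ℝ (Fin n)))
    (a : EuclideanSpace ℝ (Fin n) → ℝ) (ha0 : ∀ x, 0 ≤ a x)
    (hai : IntegrableOn a Ω)
    (u : EuclideanSpace ℝ (Fin n) → ℝ) (K : ℝ≥0) (hu : LipschitzWith K u)
    (hmin : ∀ v : EuclideanSpace ℝ (Fin n) → ℝ, (∃ K', LipschitzWith K' v) →
      (∀ x ∈ frontier Ω, v x = u x) →
      (∫ x in Ω, a x * ‖gradient u x‖) ≤ ∫ x in Ω, a x * ‖gradient v x‖)
    (lam : ℝ) :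
    (∀ v : EuclideanSpace ℝ (Fin n) → ℝ, (∃ K', LipschitzWith K' v) →
      (∀ x ∈ frontier Ω, v x = max (u x - lam) 0) →
      (∫ x in Ω, a x * ‖gradient (fun y => max (u y - lam) 0) x‖) ≤
        ∫ x in Ω, a x * ‖gradient v x‖) ∧
    (∀ v : EuclideanSpace ℝ (Fin n) → ℝ, (∃ K', LipschitzWith K' v) →
      (∀ x ∈ frontier Ω, v x = min (u x) lam) →
      (∫ x in Ω, a x * ‖gradient (fun y => min (u y) lam) x‖) ≤
        ∫ x in Ω, a x * ‖gradient v x‖) := by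
  set upper := fun y => max (u y - lam) 0
  set lower := fun y => min (u y) lam
  have hsum : upper + lower = u := funext fun y => max_sub_zero_add_min (u y) lam
  have hupper : LipschitzWith (K + 0) upper := (hu.sub (.const lam)).max_const 0
  have hlower : LipschitzWith K lower := hu.min_const lam
  have hnorm : ∀ x, ‖fderiv ℝ upper x‖ + ‖fderiv ℝ lower x‖ ≤ ‖fderiv ℝ u x‖ :=
    norm_fderiv_max_sub_add_norm_fderiv_min_le hu.continuous lam
  have hmin' : IsWeightedLeastGradient volume Ω a u := hmin
  rw [← hsum] at hnorm hmin'
  refine ⟨hmin'.of_add ha0 hai hupper hlower (.of_forall hnorm), ?_⟩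
  rw [add_comm upper lower] at hnorm hmin'
  exact hmin'.of_add ha0 hai hlower hupper (.of_forall fun x => (add_comm _ _).le.trans (hnorm x))

/-- Truncations of minimizers of the weighted least gradient functional are
minimizers with respect to their own boundary values: if `u` minimizes
`∫_Ω a‖∇·‖` among Lipschitz functions with its boundary values on `∂Ω`, then so do
`u₊ = max (u - λ) 0` and `u₋ = min u λ`. -/
theorem truncations_of_minimizers_are_minimizers
    (n : ℕ) (hn : 1 ≤ n)
    (Ω : Set (EuclideanSpace ℝ (Fin n))) (hΩo : IsOpen Ω)
    (hΩb : Bornology.IsBounded Ω)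
    (a : EuclideanSpace ℝ (Fin n) → ℝ) (ha0 : ∀ x, 0 ≤ a x)
    (hai : IntegrableOn a Ω)
    (u : EuclideanSpace ℝ (Fin n) → ℝ) (K : ℝ≥0) (hu : LipschitzWith K u)
    (hmin : ∀ v : EuclideanSpace ℝ (Fin n) → ℝ, (∃ K', LipschitzWith K' v) →
      (∀ x ∈ frontier Ω, v x = u x) →
      (∫ x in Ω, a x * ‖gradient u x‖) ≤ ∫ x in Ω, a x * ‖gradient v x‖)
    (lam : ℝ) :
    (∀ v : EuclideanSpace ℝ (Fin n) → ℝ, (∃ K', LipschitzWith K' v) →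
      (∀ x ∈ frontier Ω, v x = max (u x - lam) 0) →
      (∫ x in Ω, a x * ‖gradient (fun y => max (u y - lam) 0) x‖) ≤
        ∫ x in Ω, a x * ‖gradient v x‖) ∧
    (∀ v : EuclideanSpace ℝ (Fin n) → ℝ, (∃ K', LipschitzWith K' v) →
      (∀ x ∈ frontier Ω, v x = min (u x) lam) →
      (∫ x in Ω, a x * ‖gradient (fun y => min (u y) lam) x‖) ≤
        ∫ x in Ω, a x * ‖gradient v x‖) :=
  truncations_of_minimizers_are_minimizers_general n Ω a ha0 hai u K hu hmin lam
end

section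
/- Topological separation lemma used in the uniqueness proof: Let n ≥ 1 and let Ω ⊆ ℝⁿ be a nonempty bounded open set whose frontier ∂Ω is connected and satisfies ∂Ω ⊆ closure(ℝⁿ \ closure(Ω)), and such that ℝⁿ \ closure(Ω) is connected. Let Σ ⊆ Ω be a compact set such that ℝⁿ \ Σ has exactly two connected components and such that Ω \ Σ has exactly two connected components O₁ and O₂. Then the frontier of O₁ is contained in Σ, or the frontier of O₂ is contained in Σ. -/
/-!
The exterior `E = (closure Ω)ᶜ` is connected and misses `S`, so it lies in one component of `Sᶜ`,
say `A`. Since `∂Ω ⊆ closure E`, the whole complement of `Ω` lies in `closure A`, so the other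
component `B` (open and disjoint from `A`) lies in `Ω \ S = O₁ ∪ O₂`. Some `Oᵢ` meets `B`, hence
lies in `B` by connectedness. A point of `∂Oᵢ` outside `S` would lie in `closure B \ A ⊆ B ⊆ Ω`,
hence in `O₁ ∪ O₂`, which is impossible for the frontier of one of two disjoint open sets.
-/

open Set

variable {X : Type*} [TopologicalSpace X]

theorem frontier_subset_compl_union_of_disjoint {O O' : Set X} (hO : IsOpen O) (hO' : IsOpen O')
    (hOO' : Disjoint O O') : frontier O ⊆ (O ∪ O')ᶜ := by
  intro x hx hxO
  rcases hxO with hxO | hxO'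
  · exact (hO.inter_frontier_eq.subset ⟨hxO, hx⟩ : x ∈ (∅ : Set X))
  · exact disjoint_left.mp (hOO'.closure_left hO') (frontier_subset_closure hx) hxO'

theorem compl_subset_closure_exterior {Ω : Set X} (hΩ : IsOpen Ω)
    (hfr : frontier Ω ⊆ closure (closure Ω)ᶜ) : Ωᶜ ⊆ closure (closure Ω)ᶜ := by
  intro x hxΩ
  by_cases hx : x ∈ closure Ω
  · exact hfr (hΩ.frontier_eq ▸ ⟨hx, hxΩ⟩)
  · exact subset_closure hx

theorem subset_of_disjoint_exterior {Ω B : Set X} (hΩ : IsOpen Ω)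
    (hfr : frontier Ω ⊆ closure (closure Ω)ᶜ) (hB : IsOpen B) (hBE : Disjoint B (closure Ω)ᶜ) :
    B ⊆ Ω := fun x hxB => by
  by_contra hxΩ
  exact disjoint_left.mp (hBE.closure_right hB) hxB (compl_subset_closure_exterior hΩ hfr hxΩ)

section Partition

variable {Ω S A B O O' : Set X}

theorem frontier_subset_of_subset_component (hA : IsOpen A)
    (hAB : Disjoint A B) (hABS : A ∪ B = Sᶜ) (hBΩ : B ⊆ Ω)
    (hO : IsOpen O) (hO' : IsOpen O') (hOO' : Disjoint O O') (hOu : O ∪ O' = Ω \ S)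
    (hOB : O ⊆ B) : frontier O ⊆ S := by
  intro x hx
  by_contra hxS
  have hxB : x ∈ B := by
    have hxA : x ∉ A := fun hxA =>
      disjoint_left.mp (hAB.closure_right hA) hxA (closure_mono hOB (frontier_subset_closure hx))
    simpa [hxA] using (hABS.symm ▸ hxS : x ∈ A ∪ B)
  exact frontier_subset_compl_union_of_disjoint hO hO' hOO' hx (hOu ▸ ⟨hBΩ hxB, hxS⟩)

theorem frontier_subset_or_frontier_subset_of_exterior_subset {O₁ O₂ : Set X}
    (hΩ : IsOpen Ω) (hfr : frontier Ω ⊆ closure (closure Ω)ᶜ)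
    (hA : IsOpen A) (hB : IsOpen B) (hBne : B.Nonempty) (hAB : Disjoint A B)
    (hABS : A ∪ B = Sᶜ) (hEA : (closure Ω)ᶜ ⊆ A)
    (hO₁o : IsOpen O₁) (hO₂o : IsOpen O₂) (hO₁ : IsPreconnected O₁) (hO₂ : IsPreconnected O₂)
    (hOdisj : Disjoint O₁ O₂) (hOu : O₁ ∪ O₂ = Ω \ S) :
    frontier O₁ ⊆ S ∨ frontier O₂ ⊆ S := by
  have hBΩ : B ⊆ Ω := subset_of_disjoint_exterior hΩ hfr hB (hAB.symm.mono_right hEA)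
  have hΩS : Ω \ S ⊆ A ∪ B := hABS ▸ sdiff_subset_compl Ω S
  obtain ⟨y, hyB⟩ := hBne
  have hyO : y ∈ O₁ ∪ O₂ := hOu ▸ ⟨hBΩ hyB, (hABS ▸ mem_union_right A hyB : y ∈ Sᶜ)⟩
  rcases hyO with hy₁ | hy₂
  · have hO₁B := hO₁.subset_right_of_subset_union hA hB hAB
      (hOu ▸ subset_union_left |>.trans hΩS) ⟨y, hy₁, hyB⟩
    exact .inl (frontier_subset_of_subset_component hA hAB hABS hBΩ hO₁o hO₂o hOdisj hOu hO₁B)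
  · have hO₂B := hO₂.subset_right_of_subset_union hA hB hAB
      (hOu ▸ subset_union_right |>.trans hΩS) ⟨y, hy₂, hyB⟩
    exact .inr (frontier_subset_of_subset_component hA hAB hABS hBΩ hO₂o hO₁o hOdisj.symm
      (union_comm O₂ O₁ ▸ hOu) hO₂B)

end Partition

theorem topological_separation_lemma_general
    (n : ℕ)
    (Ω : Set (EuclideanSpace ℝ (Fin n)))
    (hΩo : IsOpen Ω)
    (hfrSub : frontier Ω ⊆ closure ((closure Ω)ᶜ))
    (hext : IsConnected ((closure Ω)ᶜ))
    (S : Set (EuclideanSpace ℝ (Fin n))) (hSΩ : S ⊆ Ω)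
    (A B : Set (EuclideanSpace ℝ (Fin n)))
    (hAo : IsOpen A) (hBo : IsOpen B)
    (hA : IsConnected A) (hB : IsConnected B)
    (hABdisj : Disjoint A B) (hABuniv : A ∪ B = Sᶜ)
    (O₁ O₂ : Set (EuclideanSpace ℝ (Fin n)))
    (hO₁o : IsOpen O₁) (hO₂o : IsOpen O₂)
    (hO₁ : IsConnected O₁) (hO₂ : IsConnected O₂)
    (hOdisj : Disjoint O₁ O₂) (hOu : O₁ ∪ O₂ = Ω \ S) :
    frontier O₁ ⊆ S ∨ frontier O₂ ⊆ S := by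
  have hEAB : (closure Ω)ᶜ ⊆ A ∪ B :=
    hABuniv ▸ compl_subset_compl.mpr (hSΩ.trans subset_closure)
  rcases hext.isPreconnected.subset_or_subset hAo hBo hABdisj hEAB with hEA | hEB
  · exact frontier_subset_or_frontier_subset_of_exterior_subset hΩo hfrSub hAo hBo hB.nonempty
      hABdisj hABuniv hEA hO₁o hO₂o hO₁.isPreconnected hO₂.isPreconnected hOdisj hOu
  · exact frontier_subset_or_frontier_subset_of_exterior_subset hΩo hfrSub hBo hAo hA.nonempty
      hABdisj.symm (union_comm A B ▸ hABuniv) hEB hO₁o hO₂o hO₁.isPreconnected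
      hO₂.isPreconnected hOdisj hOu

/-- Topological separation lemma used in the uniqueness proof: let `Ω ⊆ ℝⁿ` be a
nonempty bounded open set whose frontier is connected, satisfies
`∂Ω ⊆ closure(ℝⁿ \ closure Ω)`, and whose exterior `ℝⁿ \ closure Ω` is connected.
Let `S ⊆ Ω` be compact such that `ℝⁿ \ S` has exactly two connected components
(encoded as a partition into two disjoint open connected sets `A`, `B`) and such
that `Ω \ S` has exactly two connected components `O₁`, `O₂` (encoded similarly).
Then the frontier of `O₁` or the frontier of `O₂` is contained in `S`. -/
theorem topological_separation_lemma
    (n : ℕ) (hn : 1 ≤ n)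
    (Ω : Set (EuclideanSpace ℝ (Fin n))) (hne : Ω.Nonempty)
    (hΩo : IsOpen Ω) (hΩb : Bornology.IsBounded Ω)
    (hfrConn : IsConnected (frontier Ω))
    (hfrSub : frontier Ω ⊆ closure ((closure Ω)ᶜ))
    (hext : IsConnected ((closure Ω)ᶜ))
    (S : Set (EuclideanSpace ℝ (Fin n))) (hSΩ : S ⊆ Ω) (hSc : IsCompact S)
    (A B : Set (EuclideanSpace ℝ (Fin n)))
    (hAo : IsOpen A) (hBo : IsOpen B)
    (hA : IsConnected A) (hB : IsConnected B)
    (hABdisj : Disjoint A B) (hABuniv : A ∪ B = Sᶜ)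
    (O₁ O₂ : Set (EuclideanSpace ℝ (Fin n)))
    (hO₁o : IsOpen O₁) (hO₂o : IsOpen O₂)
    (hO₁ : IsConnected O₁) (hO₂ : IsConnected O₂)
    (hOdisj : Disjoint O₁ O₂) (hOu : O₁ ∪ O₂ = Ω \ S) :
    frontier O₁ ⊆ S ∨ frontier O₂ ⊆ S :=
  topological_separation_lemma_general n Ω hΩo hfrSub hext S hSΩ A B hAo hBo hA hB hABdisj hABuniv
    O₁ O₂ hO₁o hO₂o hO₁ hO₂ hOdisj hOu
end
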